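/- Let g : {0,1}^n → ℝ^n be monotone increasing, u ∈ ℝ̄^n, and suppose E(u) = y with y_k = 0 and u_k = +∞. Let x ∈ ℝ̄ with x > g(y)_k. Then E(u[k:=x]) = y. -/

import Mathlib

open Function

/-- Best-response map: `G_u(y) i = 𝟙(g(y)_i ≥ u_i)`, comparisons in the extended reals. -/
noncomputable def Gmap {n : ℕ} (g : (Fin n → Bool) → Fin n → ℝ) (u : Fin n → EReal)
    (y : Fin n → Bool) : Fin n → Bool :=
  fun i => decide (u i ≤ ((g y i : ℝ) : EReal))

/-- Minimal equilibrium: `E(u) = (G_u)^[n](0)`. -/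
noncomputable def Emin {n : ℕ} (g : (Fin n → Bool) → Fin n → ℝ) (u : Fin n → EReal) : Fin n → Bool :=
  (Gmap g u)^[n] (fun _ => false)

/-!
The iterates `(G_u)^[j] 0` increase with `j`, so all of them lie below `E(u) = y`. On the
interval `{z ≤ y}` the maps `G_u` and `G_{u[k:=x]}` agree: at coordinate `k` both answer `0`,
since `u_k = ⊤` exceeds every real and `x > g(y)_k ≥ g(z)_k`. Hence the two orbits of `0`
coincide up to step `n`.
-/

theorem Function.iterate_eq_of_eqOn {α : Type*} {f f' : α → α} {s : Set α}
    (h : Set.EqOn f' f s) {x : α} :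
    ∀ m, (∀ j < m, f^[j] x ∈ s) → f'^[m] x = f^[m] x
  | 0, _ => rfl
  | m + 1, hs => by
    rw [iterate_succ_apply', iterate_succ_apply',
      iterate_eq_of_eqOn h m fun j hj => hs j (by omega), h (hs m (by omega))]

section

variable {n : ℕ} {g : (Fin n → Bool) → Fin n → ℝ}

theorem Gmap_monotone (hg : Monotone g) (u : Fin n → EReal) : Monotone (Gmap g u) :=
  fun _ _ h i => by
    simp only [Gmap, Bool.le_iff_imp, decide_eq_true_eq]
    exact fun hu => hu.trans (EReal.coe_le_coe_iff.mpr (hg h i))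

theorem iterate_Gmap_le_Emin (hg : Monotone g) (u : Fin n → EReal) {j : ℕ} (hj : j ≤ n) :
    (Gmap g u)^[j] (fun _ => false) ≤ Emin g u :=
  (Gmap_monotone hg u).monotone_iterate_of_le_map bot_le hj

theorem Gmap_update_eqOn_Iic (hg : Monotone g) {u : Fin n → EReal} {y : Fin n → Bool}
    {k : Fin n} (huk : u k = ⊤) {x : EReal} (hx : ((g y k : ℝ) : EReal) < x) :
    Set.EqOn (Gmap g (update u k x)) (Gmap g u) (Set.Iic y) := by
  intro z (hz : z ≤ y)
  funext i
  rcases eq_or_ne i k with rfl | hik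
  · have hxz : ¬ x ≤ ((g z i : ℝ) : EReal) :=
      not_le.mpr (lt_of_le_of_lt (EReal.coe_le_coe_iff.mpr (hg hz i)) hx)
    simp [Gmap, hxz, huk]
  · simp [Gmap, update_of_ne hik]

end

theorem Emin_update_above_utility_general {n : ℕ} (g : (Fin n → Bool) → Fin n → ℝ)
    (hg : Monotone g) (u : Fin n → EReal) (y : Fin n → Bool) (hy : Emin g u = y)
    (k : Fin n) (huk : u k = ⊤) (x : EReal)
    (hx : ((g y k : ℝ) : EReal) < x) :
    Emin g (Function.update u k x) = y := by
  have horbit : ∀ j < n, (Gmap g u)^[j] (fun _ => false) ∈ Set.Iic y := fun j hj =>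
    hy ▸ iterate_Gmap_le_Emin hg u hj.le
  exact (iterate_eq_of_eqOn (Gmap_update_eqOn_Iic hg huk hx) n horbit).trans hy

/-- Induction step (non-acting coordinate): if `E(u) = y`, `y_k = 0` and `u_k = +∞`,
then replacing `u_k` by any `x` strictly above `g(y)_k` preserves the minimal
equilibrium. -/
theorem Emin_update_above_utility {n : ℕ} (g : (Fin n → Bool) → Fin n → ℝ)
    (hg : Monotone g) (u : Fin n → EReal) (y : Fin n → Bool) (hy : Emin g u = y)
    (k : Fin n) (hk : y k = false) (huk : u k = ⊤) (x : EReal)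
    (hx : ((g y k : ℝ) : EReal) < x) :
    Emin g (Function.update u k x) = y :=
  Emin_update_above_utility_general g hg u y hy k huk x hx
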